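/- arXiv:2509.23064 — 2 statements merged into one kernel-verified Lean document; each statement's English description precedes it below -/
import Mathlib

section
/- Let s > 1 and l ≥ 3, and let G_{s,l} = F_{s,l}·F'_{s,l}. Then for every t ∈ ℝ, (F'_{s,l}(t))² ≤ s²·G'_{s,l}(t). -/
/-!
Since `G' = F'² + F F''` and `s² ≥ 1`, it suffices that `F F'' ≥ 0`. Now `F(t) = φ(|t|)` for a
profile `φ` which is `C²` on `(0, ∞)`: the constants `η, a, b` are exactly those for which the two
pieces agree at `l` in value, slope and curvature. Moreover `φ'' ≥ 0`, and `φ ≥ 0` since the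
outer piece stays above its value `l^s` at the junction. At `t = 0` both sides vanish, as
`G(u) = s |u|^(2s-2) u` near `0`.
-/

/-- The auxiliary function `F_{s,l}` of Definition 6.1. -/
noncomputable def Fsl (s l t : ℝ) : ℝ :=
  if |t| ≤ l then |t| ^ s
  else (1 - s ^ 2) * l ^ s + (s * (s + 1) / 2) * l ^ (s - 1) * |t|
    + (s * (s - 1) / 2) * l ^ (s + 1) * |t|⁻¹

open Filter Topology Set

theorem hasDerivAt_ite_le {f g : ℝ → ℝ} {a b c x : ℝ}
    (hf : x ≤ c → HasDerivAt f a x) (hg : c ≤ x → HasDerivAt g b x)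
    (hfg : f c = g c) (hab : x = c → a = b) :
    HasDerivAt (fun y => if y ≤ c then f y else g y) (if x ≤ c then a else b) x := by
  rcases lt_trichotomy x c with hx | rfl | hx
  · rw [if_pos hx.le]
    refine (hf hx.le).congr_of_eventuallyEq ?_
    filter_upwards [Iio_mem_nhds hx] with y hy using if_pos hy.le
  · rw [if_pos le_rfl]
    have hleft : HasDerivWithinAt (fun y => if y ≤ x then f y else g y) a (Iic x) x :=
      (hf le_rfl).hasDerivWithinAt.congr (fun y hy => if_pos hy) (if_pos le_rfl)
    have hright : HasDerivWithinAt (fun y => if y ≤ x then f y else g y) a (Ici x) x := by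
      rw [hab rfl]
      refine (hg le_rfl).hasDerivWithinAt.congr (fun y hy => ?_) (by rw [if_pos le_rfl, hfg])
      rcases (mem_Ici.mp hy).eq_or_lt with rfl | hlt
      · rw [if_pos le_rfl, hfg]
      · exact if_neg hlt.not_ge
    simpa [Iic_union_Ici] using hleft.union hright
  · rw [if_neg hx.not_ge]
    refine (hg hx.le).congr_of_eventuallyEq ?_
    filter_upwards [Ioi_mem_nhds hx] with y hy using if_neg hy.not_ge

theorem hasDerivAt_mul_id_of_tendsto_zero {g : ℝ → ℝ} (hg : Tendsto g (𝓝 0) (𝓝 0)) :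
    HasDerivAt (fun u => g u * u) 0 0 := by
  rw [hasDerivAt_iff_tendsto_slope_zero]
  refine (hg.mono_left nhdsWithin_le_nhds).congr' ?_
  filter_upwards [self_mem_nhdsWithin] with u (hu : u ≠ 0)
  simp only [zero_add, mul_zero, sub_zero, smul_eq_mul]
  field_simp

theorem eventually_sign_eq {x : ℝ} (hx : x ≠ 0) :
    ∀ᶠ u in 𝓝 x, SignType.sign u = SignType.sign x :=
  (continuousAt_sign_of_ne_zero hx).preimage_mem_nhds (t := {SignType.sign x}) (by simp)

theorem sign_mul_sign_of_ne_zero {t : ℝ} (ht : t ≠ 0) :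
    (SignType.sign t : ℝ) * SignType.sign t = 1 := by
  rcases ht.lt_or_gt with h | h <;> simp [sign_neg, sign_pos, h]

namespace Fsl

variable {s l x : ℝ}

-- `Fsl s l t` is `profile s l |t|` by definition.
noncomputable def profile (s l x : ℝ) : ℝ :=
  if x ≤ l then x ^ s
  else (1 - s ^ 2) * l ^ s + (s * (s + 1) / 2) * l ^ (s - 1) * x
    + (s * (s - 1) / 2) * l ^ (s + 1) * x⁻¹

noncomputable def profileDeriv (s l x : ℝ) : ℝ :=
  if x ≤ l then s * x ^ (s - 1)
  else s * (s + 1) / 2 * l ^ (s - 1) - s * (s - 1) / 2 * l ^ (s + 1) / x ^ 2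

noncomputable def profileDeriv2 (s l x : ℝ) : ℝ :=
  if x ≤ l then s * (s - 1) * x ^ (s - 2)
  else s * (s - 1) * l ^ (s + 1) / x ^ 3

theorem hasDerivAt_profile (hl : 0 < l) (hx : 0 < x) :
    HasDerivAt (profile s l) (profileDeriv s l x) x := by
  unfold profile profileDeriv
  refine hasDerivAt_ite_le (fun _ => Real.hasDerivAt_rpow_const (Or.inl hx.ne'))
    (fun hlx => ?outer) ?value fun hxl => ?slope
  case value => rw [Real.rpow_sub_one hl.ne', Real.rpow_add_one hl.ne']; field_simp; ring
  case slope => rw [hxl, Real.rpow_sub_one hl.ne', Real.rpow_add_one hl.ne']; field_simp; ring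
  case outer =>
    have hx0 : x ≠ 0 := (hl.trans_le hlx).ne'
    refine ((((hasDerivAt_id x).const_mul _).const_add _).add
      ((hasDerivAt_inv hx0).const_mul _)).congr_deriv ?_
    field_simp
    ring

theorem hasDerivAt_profileDeriv (hl : 0 < l) (hx : 0 < x) :
    HasDerivAt (profileDeriv s l) (profileDeriv2 s l x) x := by
  unfold profileDeriv profileDeriv2
  refine hasDerivAt_ite_le (fun _ => ?inner) (fun hlx => ?outer) ?value fun hxl => ?slope
  case value => rw [Real.rpow_sub_one hl.ne', Real.rpow_add_one hl.ne']; field_simp; ring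
  case slope => rw [hxl, Real.rpow_add_one hl.ne', Real.rpow_sub hl, Real.rpow_two]; field_simp
  case inner =>
    refine ((Real.hasDerivAt_rpow_const (p := s - 1) (Or.inl hx.ne')).const_mul s).congr_deriv ?_
    ring_nf
  case outer =>
    have hx0 : x ≠ 0 := (hl.trans_le hlx).ne'
    refine (((hasDerivAt_const x _).div (hasDerivAt_pow 2 x) (pow_ne_zero 2 hx0)).const_sub
      _).congr_deriv ?_
    field_simp
    ring

theorem profile_nonneg (hs : 0 ≤ s) (hl : 0 < l) (hx : 0 ≤ x) : 0 ≤ profile s l x := by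
  unfold profile
  split_ifs with hxl
  · exact Real.rpow_nonneg hx s
  · have hlx : l < x := not_le.mp hxl
    have hx0 : 0 < x := hl.trans hlx
    -- the junction at `l` makes `l x (profile x / l ^ s - 1)` a quadratic with root `l`
    have hfactor : (1 - s ^ 2) * l ^ s + (s * (s + 1) / 2) * l ^ (s - 1) * x
        + (s * (s - 1) / 2) * l ^ (s + 1) * x⁻¹
        = l ^ s * (l * x + (x - l) * (s * (s + 1) / 2 * x - s * (s - 1) / 2 * l)) / (l * x) := by
      rw [Real.rpow_sub_one hl.ne', Real.rpow_add_one hl.ne']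
      field_simp
      ring
    rw [hfactor]
    have hlin : 0 ≤ s * (s + 1) / 2 * x - s * (s - 1) / 2 * l := by nlinarith
    positivity

theorem profileDeriv2_nonneg (hs : 1 ≤ s) (hl : 0 ≤ l) (hx : 0 ≤ x) :
    0 ≤ profileDeriv2 s l x := by
  have hss : 0 ≤ s * (s - 1) := mul_nonneg (by linarith) (by linarith)
  unfold profileDeriv2
  split_ifs
  · exact mul_nonneg hss (Real.rpow_nonneg hx _)
  · exact div_nonneg (mul_nonneg hss (Real.rpow_nonneg hl _)) (pow_nonneg hx 3)

end Fsl

open Fsl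

section

variable {s l : ℝ}

noncomputable def Fsl' (s l t : ℝ) : ℝ := profileDeriv s l |t| * SignType.sign t

theorem Fsl_eventuallyEq_rpow (hl : 0 < l) : Fsl s l =ᶠ[𝓝 0] fun u => |u| ^ s := by
  filter_upwards [Metric.ball_mem_nhds 0 hl] with u hu
  rw [Fsl, if_pos (by simpa using hu : |u| < l).le]

theorem hasDerivAt_Fsl (hs : 1 < s) (hl : 0 < l) (t : ℝ) :
    HasDerivAt (Fsl s l) (Fsl' s l t) t := by
  rcases eq_or_ne t 0 with rfl | ht
  · have h := (hasDerivAt_abs_rpow 0 hs).congr_of_eventuallyEq (Fsl_eventuallyEq_rpow hl)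
    simpa [Fsl'] using h
  · exact (hasDerivAt_profile hl (abs_pos.mpr ht)).comp t (hasDerivAt_abs ht)

theorem hasDerivAt_Fsl' {t : ℝ} (hl : 0 < l) (ht : t ≠ 0) :
    HasDerivAt (Fsl' s l) (profileDeriv2 s l |t|) t := by
  have h := ((hasDerivAt_profileDeriv (s := s) hl (abs_pos.mpr ht)).comp t
    (hasDerivAt_abs ht)).mul_const (SignType.sign t : ℝ)
  rw [mul_assoc, sign_mul_sign_of_ne_zero ht, mul_one] at h
  refine h.congr_of_eventuallyEq ?_
  filter_upwards [eventually_sign_eq ht] with u hu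
  rw [Fsl', hu]
  rfl

theorem hasDerivAt_Fsl_mul_Fsl'_zero (hs : 1 < s) (hl : 0 < l) :
    HasDerivAt (fun u => Fsl s l u * Fsl' s l u) 0 0 := by
  have hg : Tendsto (fun u : ℝ => s * |u| ^ (2 * s - 2)) (𝓝 0) (𝓝 0) := by
    have h : ContinuousAt (fun u : ℝ => s * |u| ^ (2 * s - 2)) 0 :=
      (continuous_abs.continuousAt.rpow_const (Or.inr (by linarith))).const_mul s
    simpa [Real.zero_rpow (by linarith : 2 * s - 2 ≠ 0)] using h.tendsto
  refine (hasDerivAt_mul_id_of_tendsto_zero hg).congr_of_eventuallyEq ?_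
  filter_upwards [Metric.ball_mem_nhds 0 hl] with u hu
  have hul : |u| ≤ l := (by simpa using hu : |u| < l).le
  rcases eq_or_ne u 0 with rfl | hu0
  · simp [Fsl']
  · have hpos : 0 < |u| := abs_pos.mpr hu0
    have hpow : |u| ^ s * |u| ^ (s - 1) = |u| ^ (2 * s - 2) * |u| := by
      rw [← Real.rpow_add hpos, ← Real.rpow_add_one hpos.ne']
      ring_nf
    rw [Fsl, Fsl', profileDeriv, if_pos hul, if_pos hul]
    calc |u| ^ s * (s * |u| ^ (s - 1) * SignType.sign u)
        = s * (|u| ^ s * |u| ^ (s - 1)) * SignType.sign u := by ring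
      _ = s * |u| ^ (2 * s - 2) * (|u| * SignType.sign u) := by rw [hpow]; ring
      _ = s * |u| ^ (2 * s - 2) * u := by rw [abs_mul_sign]

end

/-- For `s > 1`, `l ≥ 3`, and `G_{s,l} = F_{s,l} · F'_{s,l}`:
`(F'_{s,l}(t))² ≤ s² · G'_{s,l}(t)` for every `t ∈ ℝ`. -/
theorem stmt_8 (s l : ℝ) (hs : 1 < s) (hl : 3 ≤ l) :
    ∀ t : ℝ, (deriv (Fsl s l) t) ^ 2 ≤
      s ^ 2 * deriv (fun u => Fsl s l u * deriv (Fsl s l) u) t := by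
  have hl0 : 0 < l := by linarith
  have hderiv : deriv (Fsl s l) = Fsl' s l := funext fun t => (hasDerivAt_Fsl hs hl0 t).deriv
  intro t
  rw [hderiv]
  rcases eq_or_ne t 0 with rfl | ht
  · rw [(hasDerivAt_Fsl_mul_Fsl'_zero hs hl0).deriv]
    simp [Fsl']
  · rw [((hasDerivAt_Fsl hs hl0 t).fun_mul (hasDerivAt_Fsl' hl0 ht)).deriv]
    have hFF'' : 0 ≤ Fsl s l t * profileDeriv2 s l |t| :=
      mul_nonneg (profile_nonneg (by linarith) hl0 (abs_nonneg t))
        (profileDeriv2_nonneg hs.le hl0.le (abs_nonneg t))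
    have hs2 : 1 ≤ s ^ 2 := by nlinarith
    nlinarith [mul_nonneg (sub_nonneg.mpr hs2) (sq_nonneg (Fsl' s l t)),
      mul_nonneg (sq_nonneg s) hFF'']
end

section
/- Let s > 1 and let l, k be real numbers with 3 ≤ l < k. Then for every t ∈ ℝ, F_{s,l}(t) ≤ F_{s,k}(t). -/
open Set

noncomputable def fslTail (s l t : ℝ) : ℝ :=
  (1 - s ^ 2) * l ^ s + (s * (s + 1) / 2) * l ^ (s - 1) * t
    + (s * (s - 1) / 2) * l ^ (s + 1) * t⁻¹

theorem Fsl_eq_ite_fslTail (s l t : ℝ) :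
    Fsl s l t = if |t| ≤ l then |t| ^ s else fslTail s l |t| :=
  rfl

theorem fslTail_self {t : ℝ} (s : ℝ) (ht : 0 < t) : fslTail s t t = t ^ s := by
  have h₁ : t ^ (s - 1) * t = t ^ s := by
    rw [← Real.rpow_add_one ht.ne']; ring_nf
  have h₂ : t ^ (s + 1) * t⁻¹ = t ^ s := by
    rw [Real.rpow_add_one ht.ne']; field_simp
  unfold fslTail
  linear_combination (s * (s + 1) / 2) * h₁ + (s * (s - 1) / 2) * h₂

theorem hasDerivAt_fslTail_cutoff {x t : ℝ} (s : ℝ) (hx : 0 < x) (ht : t ≠ 0) :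
    HasDerivAt (fun l ↦ fslTail s l t)
      (s * (s - 1) * (s + 1) / 2 * x ^ (s - 2) * t⁻¹ * (t - x) ^ 2) x := by
  have h₁ := (Real.hasDerivAt_rpow_const (p := s) (Or.inl hx.ne')).const_mul (1 - s ^ 2)
  have h₂ := ((Real.hasDerivAt_rpow_const (p := s - 1) (Or.inl hx.ne')).const_mul
    (s * (s + 1) / 2)).mul_const t
  have h₃ := ((Real.hasDerivAt_rpow_const (p := s + 1) (Or.inl hx.ne')).const_mul
    (s * (s - 1) / 2)).mul_const t⁻¹
  refine ((h₁.add h₂).add h₃).congr_deriv ?_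
  have e₁ : x ^ (s - 1) = x ^ (s - 2) * x := by
    rw [← Real.rpow_add_one hx.ne']; ring_nf
  have e₂ : x ^ s = x ^ (s - 2) * x ^ 2 := by
    rw [← Real.rpow_natCast, ← Real.rpow_add hx]; ring_nf
  rw [show s - 1 - 1 = s - 2 by ring, show s + 1 - 1 = s by ring, e₁, e₂]
  field_simp
  ring

theorem fslTail_monotoneOn_cutoff {s t : ℝ} (hs : 1 ≤ s) (ht : 0 < t) :
    MonotoneOn (fun l ↦ fslTail s l t) (Ioi 0) := by
  have hderiv (x : ℝ) (hx : x ∈ Ioi 0) := hasDerivAt_fslTail_cutoff s hx ht.ne'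
  refine monotoneOn_of_hasDerivWithinAt_nonneg (convex_Ioi 0)
    (fun x hx ↦ (hderiv x hx).continuousAt.continuousWithinAt)
    (fun x hx ↦ (hderiv x (interior_subset hx)).hasDerivWithinAt) fun x hx ↦ ?_
  have hx : 0 < x := interior_subset hx
  have hcoeff : 0 ≤ s * (s - 1) * (s + 1) / 2 := by
    have : 0 ≤ s - 1 := by linarith
    positivity
  have := Real.rpow_pos_of_pos hx (s - 2)
  positivity

/-- For `s > 1` and `3 ≤ l < k`: `F_{s,l}(t) ≤ F_{s,k}(t)` for every `t ∈ ℝ`. -/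
theorem stmt_10 (s l k : ℝ) (hs : 1 < s) (hl : 3 ≤ l) (hlk : l < k) :
    ∀ t : ℝ, Fsl s l t ≤ Fsl s k t := by
  intro t
  have hl₀ : 0 < l := by linarith
  simp only [Fsl_eq_ite_fslTail]
  split_ifs with htl htk htk
  · exact le_rfl
  · linarith
  · have ht : 0 < |t| := hl₀.trans (not_le.mp htl)
    calc fslTail s l |t| ≤ fslTail s |t| |t| :=
          fslTail_monotoneOn_cutoff hs.le ht hl₀ ht (not_le.mp htl).le
      _ = |t| ^ s := fslTail_self s ht
  · exact fslTail_monotoneOn_cutoff hs.le (hl₀.trans (not_le.mp htl))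
      hl₀ (hl₀.trans hlk) hlk.le
end
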